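/- arXiv:2006.04260 — 4 statements merged into one kernel-verified Lean document; each statement's English description precedes it below -/
import Mathlib

section
/- For every propositional RTL formula ψ and every state x ∈ ℝⁿ: if ϱ(x, ψ) < 0 then x ⊭ ψ, and if x ⊭ ψ then ϱ(x, ψ) ≤ 0. (Soundness and completeness of the quantitative semantics, propositional level, part 2 of Theorem 2.) -/
open scoped NNReal

/-- Propositional RTL formulae over states in `ℝⁿ`. -/
inductive PropRTL (n : ℕ) : Type where
  | tt : PropRTL n
  | atom : ((Fin n → ℝ) → ℝ) → PropRTL n
  | not : PropRTL n → PropRTL n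
  | and : PropRTL n → PropRTL n → PropRTL n

/-- Satisfaction of a propositional RTL formula by a state `x`. -/
def PropSat {n : ℕ} (x : Fin n → ℝ) : PropRTL n → Prop
  | PropRTL.tt => True
  | PropRTL.atom h => 0 ≤ h x
  | PropRTL.not ψ => ¬ PropSat x ψ
  | PropRTL.and ψ₁ ψ₂ => PropSat x ψ₁ ∧ PropSat x ψ₂

/-- Quantitative semantics `ϱ(x, ψ)` of a propositional RTL formula, valued in the
extended reals. -/
noncomputable def varrho {n : ℕ} (x : Fin n → ℝ) : PropRTL n → EReal
  | PropRTL.tt => ⊤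
  | PropRTL.atom h => (h x : EReal)
  | PropRTL.not ψ => - varrho x ψ
  | PropRTL.and ψ₁ ψ₂ => min (varrho x ψ₁) (varrho x ψ₂)

/-- Temporal RTL formulae over maps `R : ℝ≥0 → 2^(ℝⁿ)`. -/
inductive TempRTL (n : ℕ) : Type where
  | all : PropRTL n → TempRTL n
  | or : TempRTL n → TempRTL n → TempRTL n
  | and : TempRTL n → TempRTL n → TempRTL n
  | next : ℝ≥0 → TempRTL n → TempRTL n

/-- Satisfaction `(R, t) ⊨ φ` of a temporal RTL formula. -/
def TempSat {n : ℕ} (R : ℝ≥0 → Set (Fin n → ℝ)) : TempRTL n → ℝ≥0 → Prop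
  | TempRTL.all ψ, t => ∀ x ∈ R t, PropSat x ψ
  | TempRTL.or φ₁ φ₂, t => TempSat R φ₁ t ∨ TempSat R φ₂ t
  | TempRTL.and φ₁ φ₂, t => TempSat R φ₁ t ∧ TempSat R φ₂ t
  | TempRTL.next a φ, t => TempSat R φ (t + a)

/-- Quantitative semantics `P(R, φ, t)` of a temporal RTL formula, valued in the
extended reals (the infimum over an empty set is `+∞`). -/
noncomputable def RTLrob {n : ℕ} (R : ℝ≥0 → Set (Fin n → ℝ)) : TempRTL n → ℝ≥0 → EReal
  | TempRTL.all ψ, t => ⨅ x ∈ R t, varrho x ψ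
  | TempRTL.or φ₁ φ₂, t => max (RTLrob R φ₁ t) (RTLrob R φ₂ t)
  | TempRTL.and φ₁ φ₂, t => min (RTLrob R φ₁ t) (RTLrob R φ₂ t)
  | TempRTL.next a φ, t => RTLrob R φ (t + a)

/- The contrapositives of the two halves of the theorem; they have to be proved together because
negation swaps them. -/
theorem varrho_nonneg_of_propSat_and_propSat_of_varrho_pos {n : ℕ} (x : Fin n → ℝ)
    (ψ : PropRTL n) :
    (PropSat x ψ → 0 ≤ varrho x ψ) ∧ (0 < varrho x ψ → PropSat x ψ) := by
  induction ψ with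
  | tt => simp [PropSat, varrho]
  | atom h =>
    simp only [PropSat, varrho, EReal.coe_nonneg, EReal.coe_pos]
    exact ⟨id, le_of_lt⟩
  | not ψ ih =>
    simp only [PropSat, varrho, EReal.neg_nonneg, EReal.neg_pos]
    exact ⟨fun hψ => not_lt.1 (mt ih.2 hψ), fun hneg hψ => (ih.1 hψ).not_gt hneg⟩
  | and ψ₁ ψ₂ ih₁ ih₂ =>
    simp only [PropSat, varrho, le_min_iff, lt_min_iff]
    exact ⟨fun ⟨h₁, h₂⟩ => ⟨ih₁.1 h₁, ih₂.1 h₂⟩, fun ⟨h₁, h₂⟩ => ⟨ih₁.2 h₁, ih₂.2 h₂⟩⟩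

/-- Soundness and completeness of the quantitative semantics at the
propositional level, part 2 of Theorem 2. -/
theorem prop_quant_sound_complete_neg {n : ℕ} (ψ : PropRTL n) (x : Fin n → ℝ) :
    (varrho x ψ < 0 → ¬ PropSat x ψ) ∧ (¬ PropSat x ψ → varrho x ψ ≤ 0) := by
  obtain ⟨nonneg_of_sat, sat_of_pos⟩ := varrho_nonneg_of_propSat_and_propSat_of_varrho_pos x ψ
  exact ⟨fun hneg hsat => (nonneg_of_sat hsat).not_gt hneg,
    fun hunsat => not_lt.1 (mt sat_of_pos hunsat)⟩
end

section
/- For every temporal RTL formula φ, every map R : ℝ≥0 → 2^(ℝⁿ), and every time t ∈ ℝ≥0: if P(R, φ, t) > 0 then (R, t) ⊨ φ, and if (R, t) ⊨ φ then P(R, φ, t) ≥ 0. (Soundness and completeness of the quantitative semantics of RTL, part 1 of Theorem 2.) -/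
open scoped NNReal

-- The two implications are proved jointly: negation turns each into the other.
theorem prop_quant_sound_complete_pos {n : ℕ} (ψ : PropRTL n) (x : Fin n → ℝ) :
    (0 < varrho x ψ → PropSat x ψ) ∧ (PropSat x ψ → 0 ≤ varrho x ψ) := by
  induction ψ with
  | tt => simp [varrho, PropSat]
  | atom h =>
    simp only [varrho, PropSat, EReal.coe_pos, EReal.coe_nonneg]
    exact ⟨le_of_lt, id⟩
  | not ψ ih =>
    simp only [varrho, PropSat, EReal.neg_pos, EReal.neg_nonneg]
    exact ⟨fun hneg hsat => (ih.2 hsat).not_gt hneg, fun hnot => not_lt.mp (mt ih.1 hnot)⟩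
  | and ψ₁ ψ₂ ih₁ ih₂ =>
    simp only [varrho, PropSat, lt_min_iff, le_min_iff]
    exact ⟨fun h => ⟨ih₁.1 h.1, ih₂.1 h.2⟩, fun h => ⟨ih₁.2 h.1, ih₂.2 h.2⟩⟩

/-- Soundness and completeness of the quantitative semantics of RTL,
part 1 of Theorem 2. -/
theorem temp_quant_sound_complete_pos {n : ℕ} (φ : TempRTL n)
    (R : ℝ≥0 → Set (Fin n → ℝ)) (t : ℝ≥0) :
    (0 < RTLrob R φ t → TempSat R φ t) ∧ (TempSat R φ t → 0 ≤ RTLrob R φ t) := by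
  induction φ generalizing t with
  | all ψ =>
    have hprop := prop_quant_sound_complete_pos ψ
    exact ⟨fun hpos x hx => (hprop x).1 (hpos.trans_le (iInf₂_le x hx)),
      fun hsat => le_iInf₂ fun x hx => (hprop x).2 (hsat x hx)⟩
  | or φ₁ φ₂ ih₁ ih₂ =>
    simp only [RTLrob, TempSat, lt_max_iff]
    exact ⟨Or.imp (ih₁ t).1 (ih₂ t).1,
      Or.rec (fun h => le_max_of_le_left ((ih₁ t).2 h)) fun h => le_max_of_le_right ((ih₂ t).2 h)⟩
  | and φ₁ φ₂ ih₁ ih₂ =>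
    simp only [RTLrob, TempSat, lt_min_iff, le_min_iff]
    exact ⟨And.imp (ih₁ t).1 (ih₂ t).1, And.imp (ih₁ t).2 (ih₂ t).2⟩
  | next a φ ih => exact ih (t + a)
end

section
/- For every temporal RTL formula φ, every map R : ℝ≥0 → 2^(ℝⁿ), and every time t ∈ ℝ≥0: if P(R, φ, t) < 0 then (R, t) ⊭ φ, and if (R, t) ⊭ φ then P(R, φ, t) ≤ 0. (Soundness and completeness of the quantitative semantics of RTL, part 2 of Theorem 2.) -/
/-!
Call `r` a robustness value for `P` when `0 < r → P` and `P → 0 ≤ r`. This two-sided link is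
preserved by negation (`-r` for `¬P`), `min` (for `∧`), `max` (for `∨`) and infima (for `∀`),
the only operations from which the quantitative semantics are built, so by structural induction
`P(R, φ, t)` is a robustness value for `(R, t) ⊨ φ`; the claim is its contrapositive.
-/

open scoped NNReal

def IsRobustness {α : Type*} [Zero α] [LT α] [LE α] (r : α) (P : Prop) : Prop :=
  (0 < r → P) ∧ (P → 0 ≤ r)

namespace IsRobustness

section LinearOrder

variable {α : Type*} [Zero α] [LinearOrder α] {r s : α} {P Q : Prop}

theorem not_of_neg (h : IsRobustness r P) (hr : r < 0) : ¬P :=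
  fun hP => (h.2 hP).not_gt hr

theorem nonpos_of_not (h : IsRobustness r P) (hP : ¬P) : r ≤ 0 :=
  not_lt.1 (mt h.1 hP)

theorem min (hr : IsRobustness r P) (hs : IsRobustness s Q) :
    IsRobustness (min r s) (P ∧ Q) :=
  ⟨fun h => ⟨hr.1 (lt_min_iff.1 h).1, hs.1 (lt_min_iff.1 h).2⟩,
    fun h => le_min (hr.2 h.1) (hs.2 h.2)⟩

theorem max (hr : IsRobustness r P) (hs : IsRobustness s Q) :
    IsRobustness (max r s) (P ∨ Q) :=
  ⟨fun h => (lt_max_iff.1 h).imp hr.1 hs.1,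
    fun h => h.elim (fun hP => le_max_of_le_left (hr.2 hP))
      fun hQ => le_max_of_le_right (hs.2 hQ)⟩

end LinearOrder

theorem biInf {α ι : Type*} [Zero α] [CompleteLinearOrder α] {r : ι → α} {P : ι → Prop}
    {S : Set ι} (h : ∀ i ∈ S, IsRobustness (r i) (P i)) :
    IsRobustness (⨅ i ∈ S, r i) (∀ i ∈ S, P i) :=
  ⟨fun hpos i hi => (h i hi).1 (hpos.trans_le (iInf₂_le i hi)),
    fun hP => le_iInf₂ fun i hi => (h i hi).2 (hP i hi)⟩

theorem neg {r : EReal} {P : Prop} (h : IsRobustness r P) : IsRobustness (-r) (¬P) :=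
  ⟨fun hr => h.not_of_neg (EReal.neg_pos.1 hr),
    fun hP => EReal.neg_nonneg.2 (h.nonpos_of_not hP)⟩

end IsRobustness

theorem isRobustness_varrho {n : ℕ} (x : Fin n → ℝ) (ψ : PropRTL n) :
    IsRobustness (varrho x ψ) (PropSat x ψ) := by
  induction ψ with
  | tt => exact ⟨fun _ => trivial, fun _ => le_top⟩
  | atom h => exact ⟨fun hx => EReal.coe_nonneg.1 hx.le, EReal.coe_nonneg.2⟩
  | not ψ ih => exact ih.neg
  | and ψ₁ ψ₂ ih₁ ih₂ => exact ih₁.min ih₂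

theorem isRobustness_RTLrob {n : ℕ} (R : ℝ≥0 → Set (Fin n → ℝ)) (φ : TempRTL n)
    (t : ℝ≥0) :
    IsRobustness (RTLrob R φ t) (TempSat R φ t) := by
  induction φ generalizing t with
  | all ψ => exact IsRobustness.biInf fun x _ => isRobustness_varrho x ψ
  | or φ₁ φ₂ ih₁ ih₂ => exact (ih₁ t).max (ih₂ t)
  | and φ₁ φ₂ ih₁ ih₂ => exact (ih₁ t).min (ih₂ t)
  | next a φ ih => exact ih (t + a)

/-- Soundness and completeness of the quantitative semantics of RTL,
part 2 of Theorem 2. -/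
theorem temp_quant_sound_complete_neg {n : ℕ} (φ : TempRTL n)
    (R : ℝ≥0 → Set (Fin n → ℝ)) (t : ℝ≥0) :
    (RTLrob R φ t < 0 → ¬ TempSat R φ t) ∧ (¬ TempSat R φ t → RTLrob R φ t ≤ 0) :=
  ⟨(isRobustness_RTLrob R φ t).not_of_neg, (isRobustness_RTLrob R φ t).nonpos_of_not⟩
end

section
/- Positive robustness sub-scores imply satisfaction (correctness of the verification step): let I be a nonempty finite index set, for each i ∈ I let L_i be a nonempty finite index set, and for each i ∈ I and ℓ ∈ L_i let τ_{iℓ} ∈ ℝ≥0 be a time delay and ψ_{iℓ} a propositional RTL formula. Let φ be the temporal RTL formula obtained as the finite conjunction over i ∈ I of the finite disjunctions over ℓ ∈ L_i of the subformulae ○_{τ_{iℓ}} 𝒜 ψ_{iℓ}, and for each i, ℓ define the sub-score p*_{iℓ} := inf_{x ∈ R(τ_{iℓ})} ϱ(x, ψ_{iℓ}). If min_{i ∈ I} max_{ℓ ∈ L_i} p*_{iℓ} > 0, then (R, 0) ⊨ φ. -/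
/-!
By the quantitative semantics, `ϱ(x, ψ) > 0` forces `x ⊨ ψ` (and `ϱ(x, ψ) < 0` forces `x ⊭ ψ`,
which is what makes the induction go through negations). A positive min–max of the sub-scores
selects, for every conjunct `i`, a disjunct `ℓ` with `p*_{iℓ} > 0`, so every state of
`R(τ_{iℓ})` satisfies `ψ_{iℓ}`.
-/

open scoped NNReal

/-- Finite conjunction over a nonempty finite index set `Fin (m + 1)`, formed by
iterating the binary conjunction of the grammar. -/
def bigAnd {n : ℕ} : (m : ℕ) → (Fin (m + 1) → TempRTL n) → TempRTL n
  | 0, f => f 0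
  | m + 1, f => TempRTL.and (f 0) (bigAnd m (fun i => f i.succ))

/-- Finite disjunction over a nonempty finite index set `Fin (m + 1)`, formed by
iterating the binary disjunction of the grammar. -/
def bigOr {n : ℕ} : (m : ℕ) → (Fin (m + 1) → TempRTL n) → TempRTL n
  | 0, f => f 0
  | m + 1, f => TempRTL.or (f 0) (bigOr m (fun i => f i.succ))

theorem propSat_of_varrho_pos_and_not_propSat_of_varrho_neg {n : ℕ} (x : Fin n → ℝ)
    (ψ : PropRTL n) : (0 < varrho x ψ → PropSat x ψ) ∧ (varrho x ψ < 0 → ¬ PropSat x ψ) := by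
  induction ψ with
  | tt => simp [varrho, PropSat]
  | atom h =>
    simp only [varrho, PropSat, EReal.coe_pos, EReal.coe_neg', not_le]
    exact ⟨le_of_lt, id⟩
  | not ψ ih =>
    simp only [varrho, PropSat, EReal.neg_pos, EReal.neg_lt_zero, not_not]
    exact ⟨ih.2, ih.1⟩
  | and ψ₁ ψ₂ ih₁ ih₂ =>
    simp only [varrho, PropSat, lt_min_iff, min_lt_iff, not_and]
    refine ⟨fun h => ⟨ih₁.1 h.1, ih₂.1 h.2⟩, ?_⟩
    rintro (h | h) h₁
    · exact absurd h₁ (ih₁.2 h)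
    · exact ih₂.2 h

theorem propSat_of_varrho_pos {n : ℕ} {x : Fin n → ℝ} {ψ : PropRTL n} (h : 0 < varrho x ψ) :
    PropSat x ψ :=
  (propSat_of_varrho_pos_and_not_propSat_of_varrho_neg x ψ).1 h

section

variable {n : ℕ} (R : ℝ≥0 → Set (Fin n → ℝ)) (t : ℝ≥0)

theorem tempSat_bigAnd_iff (m : ℕ) (f : Fin (m + 1) → TempRTL n) :
    TempSat R (bigAnd m f) t ↔ ∀ i, TempSat R (f i) t := by
  induction m with
  | zero => simp [bigAnd, Fin.forall_fin_one]
  | succ m ih => simp [bigAnd, TempSat, ih, Fin.forall_fin_succ]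

theorem tempSat_bigOr_iff (m : ℕ) (f : Fin (m + 1) → TempRTL n) :
    TempSat R (bigOr m f) t ↔ ∃ i, TempSat R (f i) t := by
  induction m with
  | zero => simp [bigOr, Fin.exists_fin_one]
  | succ m ih => simp [bigOr, TempSat, ih, Fin.exists_fin_succ]

theorem tempSat_next_all_of_pos {a : ℝ≥0} {ψ : PropRTL n}
    (h : 0 < ⨅ x ∈ R (t + a), varrho x ψ) : TempSat R (.next a (.all ψ)) t :=
  fun x hx => propSat_of_varrho_pos (h.trans_le (iInf₂_le x hx))

end

/-- positive robustness sub-scores imply satisfaction (correctness of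
the verification step). -/
theorem pos_subscores_imply_satisfaction {n m : ℕ} (k : Fin (m + 1) → ℕ)
    (τ : (i : Fin (m + 1)) → Fin (k i + 1) → ℝ≥0)
    (ψ : (i : Fin (m + 1)) → Fin (k i + 1) → PropRTL n)
    (R : ℝ≥0 → Set (Fin n → ℝ))
    (hpos : (0 : EReal) < ⨅ i, ⨆ ℓ, ⨅ x ∈ R (τ i ℓ), varrho x (ψ i ℓ)) :
    TempSat R
      (bigAnd m (fun i =>
        bigOr (k i) (fun ℓ => TempRTL.next (τ i ℓ) (TempRTL.all (ψ i ℓ))))) 0 := by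
  rw [tempSat_bigAnd_iff]
  intro i
  obtain ⟨ℓ, hℓ⟩ := lt_iSup_iff.mp (hpos.trans_le (iInf_le _ i))
  rw [tempSat_bigOr_iff]
  exact ⟨ℓ, tempSat_next_all_of_pos R 0 (by rwa [zero_add])⟩
end
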